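/- arXiv:2405.05815 — 2 statements merged into one kernel-verified Lean document; each statement's English description precedes it below -/
import Mathlib

section
/- (Optimality of the detection threshold.) Let c > 0 and T ≥ 0, and define Γ* := 1 / (2 − min(2T/c², 1)). Then for every r ∈ [0,1]: r·c²/2 ≤ (c²/2)·(1−r) + r·min(T, c²) if and only if r ≤ Γ*. -/
/-- **optimality of the detection threshold.** Let `c > 0` and `T ≥ 0`, and
define `Γ* := 1 / (2 − min(2T/c², 1))`. Then for every `r ∈ [0,1]`:
`r·c²/2 ≤ (c²/2)·(1−r) + r·min(T, c²)` if and only if `r ≤ Γ*`. -/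
theorem detection_threshold_optimal (c T : ℝ) (hc : 0 < c) (hT : 0 ≤ T) :
    ∀ r ∈ Set.Icc (0 : ℝ) 1,
      (r * c ^ 2 / 2 ≤ c ^ 2 / 2 * (1 - r) + r * min T (c ^ 2) ↔
        r ≤ 1 / (2 - min (2 * T / c ^ 2) 1)) := by
  intro r hr
  obtain ⟨hr0, hr1⟩ := hr
  have hc2 : (0:ℝ) < c ^ 2 := by positivity
  rcases le_or_gt (2 * T) (c ^ 2) with h | h
  · have hm1 : min (2 * T / c ^ 2) 1 = 2 * T / c ^ 2 := by
      apply min_eq_left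
      rw [div_le_one hc2]; linarith
    have hm2 : min T (c ^ 2) = T := min_eq_left (by linarith)
    rw [hm1, hm2]
    have hpos : 0 < 2 - 2 * T / c ^ 2 := by
      have : 2 * T / c ^ 2 ≤ 1 := by rw [div_le_one hc2]; linarith
      linarith
    rw [le_div_iff₀ hpos]
    constructor
    · intro hle
      have h2 : r * (2 * T / c ^ 2) * c ^ 2 = r * (2 * T) := by
        field_simp
      nlinarith [mul_pos hc2 hc2]
    · intro hle
      nlinarith [mul_le_mul_of_nonneg_right hle (le_of_lt hc2),
        (by field_simp : r * (2 * T / c ^ 2) * c ^ 2 = r * (2 * T))]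
  · have hm1 : min (2 * T / c ^ 2) 1 = 1 := by
      apply min_eq_right
      rw [le_div_iff₀ hc2]; linarith
    rw [hm1]
    norm_num
    constructor
    · intro _; exact hr1
    · intro _
      have hmin : c ^ 2 / 2 ≤ min T (c ^ 2) := by
        apply le_min <;> linarith
      nlinarith
end

section
/- (KL divergence between two Bernoulli mixtures decomposes into a discrete and a conditional part.) Let E be a measurable space, let μ₁ and μ₂ be probability measures on E with μ₁ absolutely continuous with respect to μ₂ and with finite Kullback–Leibler divergence KL(μ₁‖μ₂), and let r, r' ∈ (0,1). On the disjoint union Option E = {none} ⊔ E, define the probability measures ν₁ := (1−r)·δ_none + r·(some)_*μ₁ and ν₂ := (1−r')·δ_none + r'·(some)_*μ₂, where (some)_*μ denotes the pushforward of μ along the inclusion of E. Then KL(ν₁‖ν₂) = (1−r)·log((1−r)/(1−r')) + r·log(r/r') + r·KL(μ₁‖μ₂). -/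
open MeasureTheory

/-- The σ-algebra on the disjoint union `Option E = {none} ⊔ E`, transported from the sum
`E ⊕ PUnit` along the canonical bijection. -/
instance optionMeasurableSpace {E : Type*} [MeasurableSpace E] :
    MeasurableSpace (Option E) :=
  MeasurableSpace.comap (Equiv.optionEquivSumPUnit.{0, u_1} E) inferInstance

/-- The Kullback–Leibler divergence `KL(μ‖ν) = ∫ log(dμ/dν) dμ` (a real number), meaningful
when `μ ≪ ν` and the log Radon–Nikodym derivative is `μ`-integrable. -/
noncomputable def klDivergence {E : Type*} [MeasurableSpace E] (μ ν : Measure E) : ℝ :=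
  ∫ x, Real.log ((μ.rnDeriv ν x).toReal) ∂μ

open scoped ENNReal

/-! Both mixtures charge the atom `none` and the copy of `E`, so `ν₁` has a density with respect
to `ν₂` equal to `(1-r)/(1-r')` at `none` and to `(r/r') · dμ₁/dμ₂` on `E`. Integrating its
logarithm against `ν₁` splits into the atom, contributing `(1-r) log((1-r)/(1-r'))`, and the
copy of `E`, contributing `r (log(r/r') + KL(μ₁‖μ₂))`. -/

namespace MeasureTheory

variable {α β : Type*} [MeasurableSpace α] [MeasurableSpace β]

theorem _root_.MeasurableEmbedding.map_withDensity_comp {f : α → β} (hf : MeasurableEmbedding f)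
    (μ : Measure α) (g : β → ℝ≥0∞) :
    (μ.withDensity (g ∘ f)).map f = (μ.map f).withDensity g := by
  ext s hs
  rw [hf.map_apply, withDensity_apply _ (hf.measurable hs), withDensity_apply _ hs,
    hf.restrict_map, hf.lintegral_map]
  rfl

theorem klDivergence_eq_integral_log_of_eq_withDensity {μ ν : Measure α} [SigmaFinite ν]
    {f : α → ℝ≥0∞} (hf : Measurable f) (hμ : μ = ν.withDensity f) :
    klDivergence μ ν = ∫ x, Real.log (f x).toReal ∂μ := by
  have hrn : μ.rnDeriv ν =ᵐ[μ] f := by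
    subst hμ
    exact (withDensity_absolutelyContinuous ν f).ae_le (Measure.rnDeriv_withDensity ν hf)
  refine integral_congr_ae ?_
  filter_upwards [hrn] with x hx
  rw [hx]

theorem ae_log_toReal_ofReal_mul_rnDeriv {μ ν : Measure α} [SigmaFinite μ]
    [μ.HaveLebesgueDecomposition ν] (hac : μ ≪ ν) {c : ℝ} (hc : 0 < c) :
    ∀ᵐ x ∂μ, Real.log (ENNReal.ofReal c * μ.rnDeriv ν x).toReal
      = Real.log c + Real.log (μ.rnDeriv ν x).toReal := by
  filter_upwards [Measure.rnDeriv_pos hac, hac.ae_le (Measure.rnDeriv_lt_top μ ν)]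
    with x hpos hlt
  rw [ENNReal.toReal_mul, ENNReal.toReal_ofReal hc.le,
    Real.log_mul hc.ne' (ENNReal.toReal_ne_zero.mpr ⟨hpos.ne', hlt.ne⟩)]

end MeasureTheory

namespace Option

variable {E : Type*} [MeasurableSpace E]

def measurableEquivSumPUnit : Option E ≃ᵐ (E ⊕ PUnit) where
  toEquiv := Equiv.optionEquivSumPUnit E
  measurable_toFun := measurable_iff_comap_le.mpr le_rfl
  measurable_invFun := by
    rintro s ⟨t, ht, rfl⟩
    simpa [Set.preimage_preimage] using ht

theorem measurableEmbedding_some : MeasurableEmbedding (Option.some : E → Option E) :=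
  measurableEquivSumPUnit.symm.measurableEmbedding.comp
    ⟨Sum.inl_injective, measurable_inl, fun _ hs => hs.inl_image⟩

theorem measurable_elim {β : Type*} [MeasurableSpace β] {b : β} {g : E → β}
    (hg : Measurable g) : Measurable (fun o : Option E => o.elim b g) := by
  have : (fun o : Option E => o.elim b g)
      = Sum.elim g (fun _ => b) ∘ measurableEquivSumPUnit := by
    funext o; cases o <;> rfl
  rw [this]
  exact (hg.sumElim measurable_const).comp measurableEquivSumPUnit.measurable

end Option

section BernoulliMixture

variable {E : Type*} [MeasurableSpace E]

/-- The Bernoulli density with existence probability `r` and spatial density `μ`. -/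
noncomputable def bernoulliMixture (r : ℝ) (μ : Measure E) : Measure (Option E) :=
  ENNReal.ofReal (1 - r) • Measure.dirac (none : Option E)
    + ENNReal.ofReal r • Measure.map Option.some μ

instance (r : ℝ) (μ : Measure E) [IsFiniteMeasure μ] :
    IsFiniteMeasure (bernoulliMixture r μ) := by
  have := (Measure.dirac (none : Option E)).smul_finite (ENNReal.ofReal_ne_top (r := 1 - r))
  have := (μ.map Option.some).smul_finite (ENNReal.ofReal_ne_top (r := r))
  unfold bernoulliMixture
  infer_instance

theorem bernoulliMixture_withDensity (r : ℝ) (μ : Measure E) {h : Option E → ℝ≥0∞}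
    (hh : Measurable h) :
    (bernoulliMixture r μ).withDensity h
      = (ENNReal.ofReal (1 - r) * h none) • Measure.dirac none
        + ENNReal.ofReal r • Measure.map Option.some (μ.withDensity (h ∘ Option.some)) := by
  rw [bernoulliMixture, withDensity_add_measure, withDensity_smul_measure,
    withDensity_smul_measure, dirac_withDensity' hh, smul_smul,
    Option.measurableEmbedding_some.map_withDensity_comp]

theorem bernoulliMixture_eq_withDensity {μ₁ μ₂ : Measure E} [μ₁.HaveLebesgueDecomposition μ₂]
    (hac : μ₁ ≪ μ₂) (r : ℝ) {r' : ℝ} (hr' : r' ∈ Set.Ioo (0 : ℝ) 1) :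
    bernoulliMixture r μ₁ = (bernoulliMixture r' μ₂).withDensity fun o =>
      o.elim (ENNReal.ofReal ((1 - r) / (1 - r')))
        fun x => ENNReal.ofReal (r / r') * μ₁.rnDeriv μ₂ x := by
  obtain ⟨hr'0, hr'1⟩ := hr'
  have hscale : ∀ {a b : ℝ}, 0 < b → ENNReal.ofReal b * ENNReal.ofReal (a / b)
      = ENNReal.ofReal a := fun hb => by
    rw [← ENNReal.ofReal_mul hb.le, mul_div_cancel₀ _ hb.ne']
  have hdens : μ₂.withDensity (fun x => ENNReal.ofReal (r / r') * μ₁.rnDeriv μ₂ x)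
      = ENNReal.ofReal (r / r') • μ₁ := by
    rw [show (fun x => ENNReal.ofReal (r / r') * μ₁.rnDeriv μ₂ x)
        = ENNReal.ofReal (r / r') • μ₁.rnDeriv μ₂ from rfl,
      withDensity_smul _ (Measure.measurable_rnDeriv μ₁ μ₂),
      Measure.withDensity_rnDeriv_eq _ _ hac]
  rw [bernoulliMixture_withDensity _ _
    (Option.measurable_elim ((Measure.measurable_rnDeriv μ₁ μ₂).const_mul _))]
  simp only [Option.elim_none, Function.comp_def, Option.elim_some]
  rw [hdens, Measure.map_smul, smul_smul, hscale (sub_pos.mpr hr'1), hscale hr'0,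
    bernoulliMixture]

theorem integral_bernoulliMixture {r : ℝ} (hr : r ∈ Set.Icc (0 : ℝ) 1) (μ : Measure E)
    {φ : Option E → ℝ} (hφ : Measurable φ) (hint : Integrable (φ ∘ Option.some) μ) :
    ∫ o, φ o ∂bernoulliMixture r μ = (1 - r) * φ none + r * ∫ x, φ (some x) ∂μ := by
  obtain ⟨hr0, hr1⟩ := hr
  have hdirac : Integrable φ (Measure.dirac none) :=
    integrable_dirac' hφ.stronglyMeasurable enorm_lt_top
  have hmap : Integrable φ (μ.map Option.some) :=
    Option.measurableEmbedding_some.integrable_map_iff.mpr hint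
  rw [bernoulliMixture, integral_add_measure (hdirac.smul_measure ENNReal.ofReal_ne_top)
      (hmap.smul_measure ENNReal.ofReal_ne_top), integral_smul_measure, integral_smul_measure,
    integral_dirac' _ _ hφ.stronglyMeasurable, Option.measurableEmbedding_some.integral_map,
    ENNReal.toReal_ofReal (sub_nonneg.mpr hr1), ENNReal.toReal_ofReal hr0, smul_eq_mul,
    smul_eq_mul]

end BernoulliMixture

/-- **KL divergence between two Bernoulli mixtures decomposes.**
Let `E` be a measurable space, `μ₁, μ₂` probability measures on `E` with `μ₁ ≪ μ₂` and
finite KL divergence, and `r, r' ∈ (0,1)`. On `Option E = {none} ⊔ E`, define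
`ν₁ := (1−r)·δ_none + r·(some)_*μ₁` and `ν₂ := (1−r')·δ_none + r'·(some)_*μ₂`. Then
`KL(ν₁‖ν₂) = (1−r)·log((1−r)/(1−r')) + r·log(r/r') + r·KL(μ₁‖μ₂)`. -/
theorem klDiv_bernoulli_mixture {E : Type*} [MeasurableSpace E]
    (μ₁ μ₂ : Measure E) [IsProbabilityMeasure μ₁] [IsProbabilityMeasure μ₂]
    (hac : μ₁ ≪ μ₂)
    (hfin : Integrable (fun x => Real.log ((μ₁.rnDeriv μ₂ x).toReal)) μ₁)
    (r r' : ℝ) (hr : r ∈ Set.Ioo (0 : ℝ) 1) (hr' : r' ∈ Set.Ioo (0 : ℝ) 1) :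
    klDivergence
        (ENNReal.ofReal (1 - r) • Measure.dirac (none : Option E)
          + ENNReal.ofReal r • Measure.map Option.some μ₁)
        (ENNReal.ofReal (1 - r') • Measure.dirac (none : Option E)
          + ENNReal.ofReal r' • Measure.map Option.some μ₂)
      = (1 - r) * Real.log ((1 - r) / (1 - r')) + r * Real.log (r / r')
          + r * klDivergence μ₁ μ₂ := by
  have hratio : 0 < r / r' := div_pos hr.1 hr'.1
  have hdens := Option.measurable_elim (b := ENNReal.ofReal ((1 - r) / (1 - r')))
    ((Measure.measurable_rnDeriv μ₁ μ₂).const_mul (ENNReal.ofReal (r / r')))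
  have hlog := ae_log_toReal_ofReal_mul_rnDeriv hac hratio
  have hint := ((integrable_const (Real.log (r / r'))).add hfin).congr
    (hlog.mono fun _ hx => hx.symm)
  change klDivergence (bernoulliMixture r μ₁) (bernoulliMixture r' μ₂) = _
  rw [klDivergence_eq_integral_log_of_eq_withDensity hdens
      (bernoulliMixture_eq_withDensity hac r hr'),
    integral_bernoulliMixture (Set.Ioo_subset_Icc_self hr) _
      hdens.ennreal_toReal.log hint]
  simp only [Option.elim_none, Option.elim_some]
  rw [ENNReal.toReal_ofReal (div_pos (sub_pos.mpr hr.2) (sub_pos.mpr hr'.2)).le,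
    integral_congr_ae hlog, integral_add (integrable_const _) hfin, integral_const,
    probReal_univ, one_smul, klDivergence]
  ring
end
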